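/- arXiv:1610.00237 — 4 statements merged into one kernel-verified Lean document; each statement's English description precedes it below -/
import Mathlib

section
/- Let A ∈ M^{2×2}(ℝ) with entries a_{ij}, and define the complex numbers a := (1/2)[(a₁₁ + a₂₂) + i(a₂₁ − a₁₂)] and b := (1/2)[(a₁₁ − a₂₂) + i(a₂₁ + a₁₂)] (the complex numbers representing the conformal and anticonformal parts of A). Then A ∈ K if and only if b = (4/3)a³ and |a| = 1/2. Equivalently: if F = (F₁, F₂) ∈ W^{1,∞}(Ω; ℝ²) and v(x₁ + ix₂) := F₁(x₁,x₂) + iF₂(x₁,x₂), then DF(x) ∈ K if and only if ∂v/∂z̄(z) = (4/3)(∂v/∂z(z))³ and |∂v/∂z(z)| = 1/2 at z = x₁ + ix₂. -/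
open MeasureTheory Complex Filter Metric Set
open scoped Topology ENNReal NNReal

noncomputable section

def dotC (a b : ℂ) : ℝ := a.re * b.re + a.im * b.im

def pc1 (f : ℂ → ℝ) (x : ℂ) : ℝ := fderiv ℝ f x 1
def pc2 (f : ℂ → ℝ) (x : ℂ) : ℝ := fderiv ℝ f x Complex.I

def gradC (f : ℂ → ℝ) (x : ℂ) : ℂ := ⟨pc1 f x, pc2 f x⟩

def SigmaA (u : ℂ → ℝ) (x : ℂ) : ℂ :=
  ⟨pc1 u x * (1 - (pc2 u x) ^ 2 - (pc1 u x) ^ 2 / 3),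
   -(pc2 u x) * (1 - (pc1 u x) ^ 2 - (pc2 u x) ^ 2 / 3)⟩

def SigmaB (u : ℂ → ℝ) (x : ℂ) : ℂ :=
  ⟨pc2 u x * (1 - 2 * (pc2 u x) ^ 2 / 3),
   pc1 u x * (1 - 2 * (pc1 u x) ^ 2 / 3)⟩

def IsTestOn (Ω : Set ℂ) (ζ : ℂ → ℝ) : Prop :=
  ContDiff ℝ (⊤ : ℕ∞) ζ ∧ HasCompactSupport ζ ∧ tsupport ζ ⊆ Ω

def MemE (Ω : Set ℂ) (u : ℂ → ℝ) : Prop :=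
  (∃ L : ℝ≥0, LipschitzOnWith L u Ω) ∧
  (∀ᵐ x ∂(volume.restrict Ω), DifferentiableAt ℝ u x ∧ ‖gradC u x‖ = 1) ∧
  (∀ ζ : ℂ → ℝ, IsTestOn Ω ζ → ∫ x in Ω, dotC (SigmaA u x) (gradC ζ x) = 0) ∧
  (∀ ζ : ℂ → ℝ, IsTestOn Ω ζ → ∫ x in Ω, dotC (SigmaB u x) (gradC ζ x) = 0)

def IsBSCDomain (Ω : Set ℂ) : Prop :=
  IsOpen Ω ∧ IsConnected Ω ∧ Bornology.IsBounded Ω ∧ SimplyConnectedSpace Ω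

def Cpt (Ω' Ω : Set ℂ) : Prop := IsCompact (closure Ω') ∧ closure Ω' ⊆ Ω

def wz (v : ℂ → ℂ) (z : ℂ) : ℂ :=
  (2⁻¹ : ℂ) * (fderiv ℝ v z 1 - Complex.I * fderiv ℝ v z Complex.I)
def wzbar (v : ℂ → ℂ) (z : ℂ) : ℂ :=
  (2⁻¹ : ℂ) * (fderiv ℝ v z 1 + Complex.I * fderiv ℝ v z Complex.I)

def BeltramiAE (Ω : Set ℂ) (v : ℂ → ℂ) : Prop :=
  ∀ᵐ z ∂(volume.restrict Ω), DifferentiableAt ℝ v z ∧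
    wzbar v z = (4/3 : ℂ) * (wz v z) ^ 3 ∧ ‖wz v z‖ = 1/2

def mollify (ρ : ℂ → ℝ) (ε : ℝ) (x : ℂ) : ℝ := (ε ^ 2)⁻¹ * ρ (ε⁻¹ • x)

def smoothR (ρ : ℂ → ℝ) (ε : ℝ) (u : ℂ → ℝ) : ℂ → ℝ :=
  MeasureTheory.convolution (mollify ρ ε) u (ContinuousLinearMap.lsmul ℝ ℝ) volume

def smoothC (ρ : ℂ → ℝ) (ε : ℝ) (w : ℂ → ℂ) : ℂ → ℂ :=
  MeasureTheory.convolution (mollify ρ ε) w (ContinuousLinearMap.lsmul ℝ ℝ) volume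

def IsMollifier (ρ : ℂ → ℝ) : Prop :=
  ContDiff ℝ (⊤ : ℕ∞) ρ ∧ (∀ x, 0 ≤ ρ x) ∧ tsupport ρ ⊆ Metric.closedBall 0 1 ∧ (∫ x, ρ x) = 1

def dir : Fin 2 → ℂ := ![1, Complex.I]
def pd (i : Fin 2) (f : ℂ → ℝ) (x : ℂ) : ℝ := fderiv ℝ f x (dir i)
def comp2 (i : Fin 2) (z : ℂ) : ℝ := ![z.re, z.im] i

def wfun (u : ℂ → ℝ) (x : ℂ) : ℂ := Complex.I * gradC u x

def sep (s t : Set ℂ) : ℝ := ⨅ x ∈ s, Metric.infDist x t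


/-- The matrix `M(θ)`. -/
def Mmat (θ : ℝ) : Matrix (Fin 2) (Fin 2) ℝ :=
  !![(2/3) * Real.sin θ ^ 3, (2/3) * Real.cos θ ^ 3;
     -(Real.cos θ * (1 - (2/3) * Real.cos θ ^ 2)), Real.sin θ * (1 - (2/3) * Real.sin θ ^ 2)]

/-- The set `K` of matrices `M(θ)`, `θ ∈ [0, 2π)`. -/
def Kset : Set (Matrix (Fin 2) (Fin 2) ℝ) :=
  {A | ∃ θ ∈ Set.Ico (0:ℝ) (2 * Real.pi), A = Mmat θ}

/-- The Frobenius norm of a `2 × 2` real matrix. -/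
def frob (A : Matrix (Fin 2) (Fin 2) ℝ) : ℝ := Real.sqrt (∑ i, ∑ j, (A i j) ^ 2)

/-- The complex number `a = ((a₁₁+a₂₂) + i(a₂₁-a₁₂))/2` representing the conformal
part of `A`. -/
def confPart (A : Matrix (Fin 2) (Fin 2) ℝ) : ℂ :=
  ⟨(A 0 0 + A 1 1) / 2, (A 1 0 - A 0 1) / 2⟩

/-- The complex number `b = ((a₁₁-a₂₂) + i(a₂₁+a₁₂))/2` representing the
anticonformal part of `A`. -/
def aconfPart (A : Matrix (Fin 2) (Fin 2) ℝ) : ℂ :=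
  ⟨(A 0 0 - A 1 1) / 2, (A 1 0 + A 0 1) / 2⟩

/-- The matrix of the real total derivative of `v : ℂ → ℂ` at `z`. -/
def matOfDeriv (v : ℂ → ℂ) (z : ℂ) : Matrix (Fin 2) (Fin 2) ℝ :=
  !![(fderiv ℝ v z 1).re, (fderiv ℝ v z Complex.I).re;
     (fderiv ℝ v z 1).im, (fderiv ℝ v z Complex.I).im]


/-!
A real `2 × 2` matrix is determined by its conformal and anticonformal parts `a`, `b`, since it
acts on `ℂ` as `z ↦ a z + b z̄`. For `M(θ)` one finds `a = -i e^{iθ} / 2`, and `b = (4/3) a³`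
reduces to `sin² θ + cos² θ = 1`. Conversely `|a| = 1/2` writes `a = -i e^{iθ} / 2`, and then `A` and
`M(θ)` have the same `a` and `b`. The Wirtinger derivatives of `v` are precisely the conformal
and anticonformal parts of its Jacobian matrix.
-/

theorem Complex.exists_mem_Ico_exp_mul_I_eq {w : ℂ} (hw : ‖w‖ = 1) :
    ∃ θ ∈ Ico 0 (2 * Real.pi), exp (θ * I) = w := by
  obtain ⟨θ, rfl⟩ := (norm_eq_one_iff w).mp hw
  have hper : Function.Periodic (fun θ : ℝ => exp (θ * I)) (2 * Real.pi) := fun θ => by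
    simpa using exp_mul_I_periodic θ
  obtain ⟨θ', hθ', heq⟩ := hper.exists_mem_Ico₀ Real.two_pi_pos θ
  exact ⟨θ', hθ', heq.symm⟩

theorem eq_of_confPart_eq_of_aconfPart_eq {A B : Matrix (Fin 2) (Fin 2) ℝ}
    (ha : confPart A = confPart B) (hb : aconfPart A = aconfPart B) : A = B := by
  simp only [confPart, aconfPart, Complex.ext_iff] at ha hb
  ext i j
  fin_cases i <;> fin_cases j <;> simp <;> linarith [ha.1, ha.2, hb.1, hb.2]

theorem confPart_Mmat (θ : ℝ) : confPart (Mmat θ) = -I * exp (θ * I) / 2 := by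
  apply Complex.ext <;> simp [confPart, Mmat, exp_ofReal_mul_I_re, exp_ofReal_mul_I_im] <;> ring

theorem aconfPart_Mmat (θ : ℝ) : aconfPart (Mmat θ) = 4 / 3 * confPart (Mmat θ) ^ 3 := by
  have hsc := Real.sin_sq_add_cos_sq θ
  rw [confPart_Mmat]
  apply Complex.ext <;> simp [aconfPart, Mmat, pow_succ, exp_ofReal_mul_I_re, exp_ofReal_mul_I_im]
  · linear_combination (Real.sin θ / 2) * hsc
  · linear_combination (Real.cos θ / 2) * hsc

theorem mem_Kset_iff (A : Matrix (Fin 2) (Fin 2) ℝ) :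
    A ∈ Kset ↔ aconfPart A = 4 / 3 * confPart A ^ 3 ∧ ‖confPart A‖ = 1 / 2 := by
  constructor
  · rintro ⟨θ, -, rfl⟩
    refine ⟨aconfPart_Mmat θ, ?_⟩
    rw [confPart_Mmat]
    simp [norm_exp_ofReal_mul_I]
  · rintro ⟨hb, ha⟩
    obtain ⟨θ, hθ, hexp⟩ := exists_mem_Ico_exp_mul_I_eq (w := 2 * I * confPart A) (by simp [ha])
    have hconf : confPart (Mmat θ) = confPart A := by
      rw [confPart_Mmat, hexp]
      linear_combination (-confPart A) * I_sq
    refine ⟨θ, hθ, eq_of_confPart_eq_of_aconfPart_eq hconf.symm ?_⟩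
    rw [hb, aconfPart_Mmat, hconf]

theorem confPart_matOfDeriv (v : ℂ → ℂ) (z : ℂ) : confPart (matOfDeriv v z) = wz v z := by
  apply Complex.ext <;> simp [confPart, matOfDeriv, wz] <;> ring

theorem aconfPart_matOfDeriv (v : ℂ → ℂ) (z : ℂ) : aconfPart (matOfDeriv v z) = wzbar v z := by
  apply Complex.ext <;> simp [aconfPart, matOfDeriv, wzbar] <;> ring

/-- membership in `K` is equivalent to the constrained non-linear
Beltrami relation `b = (4/3)a³`, `|a| = 1/2`, both at the level of matrices and at
the level of Lipschitz maps `v = F₁ + iF₂`. -/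
theorem stmt5 :
    (∀ A : Matrix (Fin 2) (Fin 2) ℝ,
      A ∈ Kset ↔
        (aconfPart A = (4/3 : ℂ) * (confPart A) ^ 3 ∧ ‖confPart A‖ = 1/2)) ∧
    (∀ (Ω : Set ℂ) (v : ℂ → ℂ), (∃ L : ℝ≥0, LipschitzOnWith L v Ω) →
      ∀ z ∈ Ω, DifferentiableAt ℝ v z →
        (matOfDeriv v z ∈ Kset ↔
          (wzbar v z = (4/3 : ℂ) * (wz v z) ^ 3 ∧ ‖wz v z‖ = 1/2))) := by
  refine ⟨mem_Kset_iff, fun Ω v _ z _ _ => ?_⟩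
  rw [mem_Kset_iff, confPart_matOfDeriv, aconfPart_matOfDeriv]

end
end

section
/- There exists a constant c₀ > 0 such that for all matrices A, B ∈ K one has det(A − B) ≥ c₀ |A − B|⁴, where |·| denotes the Frobenius norm. In particular, K contains no rank-one connections: if A, B ∈ K and A ≠ B then Rank(A − B) ≠ 1. -/
open MeasureTheory Complex Filter Metric Set
open scoped Topology ENNReal NNReal

noncomputable section

/-!
Write a real `2 × 2` matrix as a conformal part `[[a, b], [-b, a]]` plus an anticonformal part
`[[d, e], [e, -d]]`; then `det A = (a² + b²) - (d² + e²)` and `|A|² = 2 (a² + b²) + 2 (d² + e²)`.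
For `M(θ)` these parts are `(a, b) = (sin θ, cos θ) / 2` and `(d, e) = (-sin 3θ, cos 3θ) / 6`.
So with `δ = θ - η` and `p = (1 - cos δ) / 2` the two parts of `M(θ) - M(η)` have squared sizes
`p` and `(1 - cos 3δ) / 18 = p - (8/9) p² (3 - 2p) ≤ p - (8/9) p²`, whence
`det (M(θ) - M(η)) ≥ (8/9) p²` while `|M(θ) - M(η)|⁴ ≤ 16 p²`. In particular the difference of
two distinct matrices of `K` has positive determinant, hence rank two.
-/

/-- `a² + b²` for the conformal part `[[a, b], [-b, a]]` of `A`. -/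
def conformalNormSq (A : Matrix (Fin 2) (Fin 2) ℝ) : ℝ :=
  ((A 0 0 + A 1 1) / 2) ^ 2 + ((A 0 1 - A 1 0) / 2) ^ 2

/-- `d² + e²` for the anticonformal part `[[d, e], [e, -d]]` of `A`. -/
def anticonformalNormSq (A : Matrix (Fin 2) (Fin 2) ℝ) : ℝ :=
  ((A 0 0 - A 1 1) / 2) ^ 2 + ((A 0 1 + A 1 0) / 2) ^ 2

section TwoByTwo

variable (A : Matrix (Fin 2) (Fin 2) ℝ)

theorem det_eq_conformalNormSq_sub_anticonformalNormSq :
    A.det = conformalNormSq A - anticonformalNormSq A := by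
  rw [Matrix.det_fin_two, conformalNormSq, anticonformalNormSq]
  ring

theorem frob_sq : frob A ^ 2 = 2 * (conformalNormSq A + anticonformalNormSq A) := by
  rw [frob, Real.sq_sqrt (by positivity), conformalNormSq, anticonformalNormSq]
  simp only [Fin.sum_univ_two]
  ring

theorem frob_eq_zero_iff : frob A = 0 ↔ A = 0 := by
  rw [frob, Real.sqrt_eq_zero (by positivity)]
  simp [add_eq_zero_iff_of_nonneg, add_nonneg, sq_nonneg, ← Matrix.ext_iff, Fin.forall_fin_two]

theorem mul_frob_pow_four_le_det {κ : ℝ} (hκ : 0 ≤ κ)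
    (hgap : anticonformalNormSq A ≤ conformalNormSq A - κ * conformalNormSq A ^ 2) :
    κ / 16 * frob A ^ 4 ≤ A.det := by
  have hanti_nonneg : 0 ≤ anticonformalNormSq A := by unfold anticonformalNormSq; positivity
  have hanti_le : anticonformalNormSq A ≤ conformalNormSq A := by
    nlinarith [sq_nonneg (conformalNormSq A)]
  have hfrob : frob A ^ 4 ≤ 16 * conformalNormSq A ^ 2 := by
    rw [show frob A ^ 4 = (frob A ^ 2) ^ 2 by ring, frob_sq]
    nlinarith
  rw [det_eq_conformalNormSq_sub_anticonformalNormSq]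
  nlinarith

end TwoByTwo

theorem sin_sub_sin_sq_add_cos_sub_cos_sq (a b : ℝ) :
    (Real.sin a - Real.sin b) ^ 2 + (Real.cos a - Real.cos b) ^ 2 = 2 * (1 - Real.cos (a - b)) := by
  rw [Real.cos_sub]
  linear_combination Real.sin_sq_add_cos_sq a + Real.sin_sq_add_cos_sq b

section Mmat

variable (θ η : ℝ)

theorem conformalNormSq_Mmat_sub :
    conformalNormSq (Mmat θ - Mmat η) = (1 - Real.cos (θ - η)) / 2 := by
  simp only [conformalNormSq, Mmat, Matrix.sub_apply, Matrix.of_apply, Matrix.cons_val',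
    Matrix.cons_val_zero, Matrix.cons_val_one, Matrix.cons_val_fin_one]
  linear_combination (1 / 4) * sin_sub_sin_sq_add_cos_sub_cos_sq θ η

theorem anticonformalNormSq_Mmat_sub :
    anticonformalNormSq (Mmat θ - Mmat η) = (1 - Real.cos (3 * (θ - η))) / 18 := by
  have hchord := sin_sub_sin_sq_add_cos_sub_cos_sq (3 * θ) (3 * η)
  rw [Real.sin_three_mul, Real.sin_three_mul, Real.cos_three_mul, Real.cos_three_mul] at hchord
  rw [mul_sub]
  simp only [anticonformalNormSq, Mmat, Matrix.sub_apply, Matrix.of_apply, Matrix.cons_val',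
    Matrix.cons_val_zero, Matrix.cons_val_one, Matrix.cons_val_fin_one]
  linear_combination (1 / 36) * hchord

theorem anticonformalNormSq_Mmat_sub_le :
    anticonformalNormSq (Mmat θ - Mmat η) ≤
      conformalNormSq (Mmat θ - Mmat η) - 8 / 9 * conformalNormSq (Mmat θ - Mmat η) ^ 2 := by
  rw [conformalNormSq_Mmat_sub, anticonformalNormSq_Mmat_sub, Real.cos_three_mul]
  have hcos : 0 ≤ Real.cos (θ - η) + 1 := by linarith [Real.neg_one_le_cos (θ - η)]
  nlinarith [mul_nonneg (sq_nonneg (1 - Real.cos (θ - η))) hcos]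

end Mmat

/-- the uniform quartic ellipticity estimate for `K`, and absence of
rank-one connections in `K`. -/
theorem stmt6 :
    ∃ c₀ : ℝ, 0 < c₀ ∧ ∀ A ∈ Kset, ∀ B ∈ Kset,
      c₀ * frob (A - B) ^ 4 ≤ (A - B).det ∧ (A ≠ B → (A - B).rank ≠ 1) := by
  refine ⟨1 / 18, by norm_num, ?_⟩
  rintro _ ⟨θ, -, rfl⟩ _ ⟨η, -, rfl⟩
  have hdet : 1 / 18 * frob (Mmat θ - Mmat η) ^ 4 ≤ (Mmat θ - Mmat η).det := by
    convert mul_frob_pow_four_le_det _ (by norm_num) (anticonformalNormSq_Mmat_sub_le θ η) using 2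
    norm_num
  refine ⟨hdet, fun hne => ?_⟩
  have hfrob : 0 < frob (Mmat θ - Mmat η) :=
    (Real.sqrt_nonneg _).lt_of_ne' ((frob_eq_zero_iff _).not.2 (sub_ne_zero.2 hne))
  have hunit : IsUnit (Mmat θ - Mmat η) :=
    (Matrix.isUnit_iff_isUnit_det _).2 (hdet.trans_lt' (by positivity)).ne'.isUnit
  rw [Matrix.rank_of_isUnit _ hunit]
  simp

end
end

section
/- For all θ, θ' ∈ ℝ, writing α := θ' − θ, the following two identities hold: det(M(θ') − M(θ)) = 4/9 − (2/3)cos(α) + (2/9)cos³(α), and |M(θ') − M(θ)|² = 10/9 − (2/3)cos(α) − (4/9)cos³(α), where |·| denotes the Frobenius norm. -/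
open MeasureTheory Complex Filter Metric Set
open scoped Topology ENNReal NNReal

noncomputable section

/-!
Via `sin³θ = (3 sin θ - sin 3θ)/4` and `cos³θ = (3 cos θ + cos 3θ)/4`, the map `M(θ)` acting on
`ℝ² ≅ ℂ` is `z ↦ a z + b z̄` with `|a| = 1/2` rotating at angle `θ` and `|b| = 1/6` at angle `3θ`.
For such a map `det = |a|² - |b|²` and `|·|² = 2(|a|² + |b|²)`, so for the difference both
quantities depend only on the chords `|Δa|² = (1 - cos α)/2` and `|Δb|² = (1 - cos 3α)/18`;
the triple-angle formula for `cos 3α` finishes the computation.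
-/

section ConformalDecomposition

variable {R : Type*} [CommRing R]

/-- The real matrix of `z ↦ (x - i y) z + (u + i v) z̄` on `ℂ ≅ R²`. -/
def conformalAnti (x y u v : R) : Matrix (Fin 2) (Fin 2) R :=
  !![x + u, y + v; v - y, x - u]

theorem conformalAnti_sub (x y u v x' y' u' v' : R) :
    conformalAnti x y u v - conformalAnti x' y' u' v'
      = conformalAnti (x - x') (y - y') (u - u') (v - v') := by
  simp only [conformalAnti, Matrix.of_sub_of, Matrix.cons_sub_cons, Matrix.empty_sub_empty]
  ring_nf

theorem det_conformalAnti (x y u v : R) :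
    (conformalAnti x y u v).det = x ^ 2 + y ^ 2 - (u ^ 2 + v ^ 2) := by
  rw [conformalAnti, Matrix.det_fin_two_of]
  ring

theorem sum_sq_conformalAnti (x y u v : R) :
    ∑ i, ∑ j, conformalAnti x y u v i j ^ 2 = 2 * (x ^ 2 + y ^ 2 + (u ^ 2 + v ^ 2)) := by
  simp only [conformalAnti, Fin.sum_univ_two, Matrix.of_apply, Matrix.cons_val_zero,
    Matrix.cons_val_one, Matrix.cons_val', Matrix.empty_val', Matrix.cons_val_fin_one]
  ring

end ConformalDecomposition

theorem frob_sq_s7 (A : Matrix (Fin 2) (Fin 2) ℝ) : frob A ^ 2 = ∑ i, ∑ j, A i j ^ 2 :=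
  Real.sq_sqrt (Finset.sum_nonneg fun _ _ => Finset.sum_nonneg fun _ _ => sq_nonneg _)

theorem Mmat_eq_conformalAnti (θ : ℝ) :
    Mmat θ = conformalAnti (Real.sin θ / 2) (Real.cos θ / 2)
      (-Real.sin (3 * θ) / 6) (Real.cos (3 * θ) / 6) := by
  rw [Mmat, conformalAnti, Real.sin_three_mul, Real.cos_three_mul]
  ring_nf

theorem Real.chord_sq (a b : ℝ) :
    (Real.sin a - Real.sin b) ^ 2 + (Real.cos a - Real.cos b) ^ 2 = 2 - 2 * Real.cos (a - b) := by
  linear_combination Real.sin_sq_add_cos_sq a + Real.sin_sq_add_cos_sq b + 2 * Real.cos_sub a b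

/-- the determinant and Frobenius norm identities for differences of
matrices in the parametrized family `M(θ)`. -/
theorem stmt7 (θ θ' : ℝ) :
    (Mmat θ' - Mmat θ).det
        = 4/9 - (2/3) * Real.cos (θ' - θ) + (2/9) * Real.cos (θ' - θ) ^ 3 ∧
    frob (Mmat θ' - Mmat θ) ^ 2
        = 10/9 - (2/3) * Real.cos (θ' - θ) - (4/9) * Real.cos (θ' - θ) ^ 3 := by
  have hchord := Real.chord_sq θ' θ
  have hchord₃ := Real.chord_sq (3 * θ') (3 * θ)
  rw [← mul_sub, Real.cos_three_mul (θ' - θ)] at hchord₃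
  rw [frob_sq_s7, Mmat_eq_conformalAnti, Mmat_eq_conformalAnti, conformalAnti_sub,
    det_conformalAnti, sum_sq_conformalAnti]
  constructor
  · linear_combination hchord / 4 - hchord₃ / 36
  · linear_combination hchord / 2 + hchord₃ / 18

end
end

section
/- Fix ξ ∈ S¹ and define Φ^ξ : ℝ² → ℝ² by Φ^ξ(z) := |z|²ξ if z·ξ > 0 and Φ^ξ(z) := 0 if z·ξ ≤ 0. Then there exists a sequence {Φ_ν} of entropies in C_c^∞(ℝ²; ℝ²) (i.e. z·DΦ_ν(z)z^⊥ = 0 for all z ∈ ℝ², Φ_ν(0) = 0, DΦ_ν(0) = 0) such that: (i) for every R > 0, sup_ν sup_{|z| ≤ R} |Φ_ν(z)| < ∞; and (ii) Φ_ν(z) → Φ^ξ(z) as ν → ∞ for every z ∈ ℝ². -/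
open MeasureTheory Complex Filter Metric Set
open scoped Topology ENNReal NNReal

noncomputable section

open Classical in
/-- The generalized entropy `Φ^ξ(z) = |z|²ξ` for `z·ξ > 0` and `0` otherwise. -/
noncomputable def PhiXi (ξ : ℂ) (z : ℂ) : ℂ :=
  if 0 < dotC z ξ then (‖z‖ ^ 2 : ℝ) • ξ else 0

/-- `Φ ∈ C_c^∞(ℝ²;ℝ²)` is an entropy: `z·DΦ(z)z^⊥ = 0` for all `z`, `Φ(0) = 0`,
`DΦ(0) = 0`. -/
def IsEntropy (Φ : ℂ → ℂ) : Prop :=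
  ContDiff ℝ (⊤ : ℕ∞) Φ ∧ HasCompactSupport Φ ∧ Φ 0 = 0 ∧ fderiv ℝ Φ 0 = 0 ∧
  ∀ z : ℂ, dotC z (fderiv ℝ Φ z (Complex.I * z)) = 0

/-!
A field `Φ(z) = f(z) z + g(z) iz` satisfies `z · DΦ(z)(iz) = |z|² (Df(z)(iz) - g(z))`, because
`z ⊥ iz` and `i(iz) = -z`; so it is an entropy as soon as `g(z) = Df(z)(iz)`. We take
`f(z) = χ_N(|z|²) ramp(N z·ξ) / N`, where the radial cutoff `χ_N` has no angular derivative and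
`ramp` vanishes on `(-∞, 1/2]` and is the identity on `[1, ∞)`. For `z·ξ ≤ 0` this gives
`Φ_N(z) = 0`; for `z·ξ > 0` and `N` large it gives `f(z) = z·ξ`, `g(z) = iz·ξ`, hence
`Φ_N(z) = (z·ξ) z + (iz·ξ) iz = |z|² ξ`. Since `|ramp(s)| ≤ |s|` and `ramp'` is bounded,
`|Φ_N(z)| ≤ C |ξ| |z|²` uniformly in `N`.
-/

open Real
open scoped InnerProductSpace

lemma dotC_eq_inner (a b : ℂ) : dotC a b = ⟪a, b⟫_ℝ := by
  simp [dotC, Complex.inner]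
  ring

lemma inner_I_mul_eq_zero (z : ℂ) : ⟪z, I * z⟫_ℝ = 0 := by
  simp [Complex.inner]
  ring

lemma inner_smul_add_inner_smul_I_mul (ξ z : ℂ) :
    ⟪ξ, z⟫_ℝ • z + ⟪ξ, I * z⟫_ℝ • (I * z) = ‖z‖ ^ 2 • ξ := by
  apply Complex.ext <;> simp [Complex.inner, Complex.sq_norm, Complex.normSq_apply] <;> ring

def polarField (f g : ℂ → ℝ) (z : ℂ) : ℂ := f z • z + g z • (I * z)

section polarField

variable {f g : ℂ → ℝ}

lemma hasFDerivAt_polarField {z : ℂ} (hf : DifferentiableAt ℝ f z)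
    (hg : DifferentiableAt ℝ g z) :
    HasFDerivAt (polarField f g)
      (f z • ContinuousLinearMap.id ℝ ℂ + (fderiv ℝ f z).smulRight z +
        (g z • I • ContinuousLinearMap.id ℝ ℂ + (fderiv ℝ g z).smulRight (I * z))) z :=
  (hf.hasFDerivAt.smul (hasFDerivAt_id z)).add
    (hg.hasFDerivAt.smul ((hasFDerivAt_id z).const_mul I))

lemma inner_fderiv_polarField_I_mul {z : ℂ} (hf : DifferentiableAt ℝ f z)
    (hg : DifferentiableAt ℝ g z) :
    ⟪z, fderiv ℝ (polarField f g) z (I * z)⟫_ℝ = ‖z‖ ^ 2 * (fderiv ℝ f z (I * z) - g z) := by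
  rw [(hasFDerivAt_polarField hf hg).fderiv]
  simp [Complex.inner, Complex.sq_norm, Complex.normSq_apply]
  ring

lemma isEntropy_polarField (hf : ContDiff ℝ (⊤ : ℕ∞) f) (hg : ContDiff ℝ (⊤ : ℕ∞) g)
    (hfc : HasCompactSupport f) (hgc : HasCompactSupport g) (hf0 : f 0 = 0)
    (hfg : ∀ z, fderiv ℝ f z (I * z) = g z) : IsEntropy (polarField f g) := by
  have hf' : Differentiable ℝ f := hf.differentiable (by simp)
  have hg' : Differentiable ℝ g := hg.differentiable (by simp)
  have hg0 : g 0 = 0 := by simpa using (hfg 0).symm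
  refine ⟨(hf.smul contDiff_id).add (hg.smul (contDiff_const.mul contDiff_id)),
    hfc.smul_right.add hgc.smul_right, by simp [polarField], ?_, fun z => ?_⟩
  · rw [(hasFDerivAt_polarField (hf' 0) (hg' 0)).fderiv]
    ext1 w
    simp [hf0, hg0]
  · rw [dotC_eq_inner, inner_fderiv_polarField_I_mul (hf' z) (hg' z), hfg, sub_self, mul_zero]

lemma norm_polarField_le (f g : ℂ → ℝ) (z : ℂ) :
    ‖polarField f g z‖ ≤ (|f z| + |g z|) * ‖z‖ := by
  calc ‖polarField f g z‖ ≤ ‖f z • z‖ + ‖g z • (I * z)‖ := norm_add_le _ _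
    _ = (|f z| + |g z|) * ‖z‖ := by simp; ring

end polarField

def ramp (t : ℝ) : ℝ := t * smoothTransition (2 * t - 1)

lemma contDiff_ramp : ContDiff ℝ (⊤ : ℕ∞) ramp :=
  contDiff_id.mul
    (smoothTransition.contDiff.comp ((contDiff_const.mul contDiff_id).sub contDiff_const))

lemma ramp_eq_zero {t : ℝ} (ht : t ≤ 1 / 2) : ramp t = 0 := by
  rw [ramp, smoothTransition.zero_of_nonpos (by linarith), mul_zero]

lemma ramp_eq_self {t : ℝ} (ht : 1 ≤ t) : ramp t = t := by
  rw [ramp, smoothTransition.one_of_one_le (by linarith), mul_one]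

lemma abs_ramp_le (t : ℝ) : |ramp t| ≤ |t| := by
  rw [ramp, abs_mul, abs_of_nonneg (smoothTransition.nonneg _)]
  exact mul_le_of_le_one_right (abs_nonneg t) (smoothTransition.le_one _)

lemma deriv_ramp_eq_zero {t : ℝ} (ht : t < 1 / 2) : deriv ramp t = 0 := by
  have : ramp =ᶠ[𝓝 t] fun _ => 0 := (eventually_lt_nhds ht).mono fun s hs => ramp_eq_zero hs.le
  rw [this.deriv_eq, deriv_const]

lemma deriv_ramp_eq_one {t : ℝ} (ht : 1 < t) : deriv ramp t = 1 := by
  have : ramp =ᶠ[𝓝 t] id := (eventually_gt_nhds ht).mono fun s hs => ramp_eq_self hs.le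
  rw [this.deriv_eq, deriv_id]

lemma exists_abs_deriv_ramp_le : ∃ M, ∀ t, |deriv ramp t| ≤ M := by
  obtain ⟨C, hC⟩ := isCompact_Icc.exists_bound_of_continuousOn
    ((contDiff_infty_iff_deriv.1 contDiff_ramp).2.continuous.continuousOn (s := Icc (0 : ℝ) 1))
  refine ⟨max C 1, fun t => ?_⟩
  rcases lt_or_ge t 0 with h0 | h0
  · simp [deriv_ramp_eq_zero (show t < 1 / 2 by linarith)]
  rcases le_or_gt t 1 with h1 | h1
  · exact (hC t ⟨h0, h1⟩).trans (le_max_left _ _)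
  · simp [deriv_ramp_eq_one h1]

def radialCutoff (N : ℝ) (z : ℂ) : ℝ := smoothTransition (N - ‖z‖ ^ 2)

section radialCutoff

variable {N : ℝ}

lemma contDiff_radialCutoff : ContDiff ℝ (⊤ : ℕ∞) (radialCutoff N) :=
  smoothTransition.contDiff.comp (contDiff_const.sub (contDiff_norm_sq ℝ))

lemma hasCompactSupport_radialCutoff : HasCompactSupport (radialCutoff N) := by
  refine HasCompactSupport.intro (isCompact_closedBall 0 (max N 1)) fun z hz => ?_
  rw [mem_closedBall, dist_zero_right, not_le, max_lt_iff] at hz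
  exact smoothTransition.zero_of_nonpos (by nlinarith)

lemma radialCutoff_eq_one {z : ℂ} (h : ‖z‖ ^ 2 + 1 ≤ N) : radialCutoff N z = 1 :=
  smoothTransition.one_of_one_le (by linarith)

lemma abs_radialCutoff_le_one (z : ℂ) : |radialCutoff N z| ≤ 1 := by
  rw [radialCutoff, abs_of_nonneg (smoothTransition.nonneg _)]
  exact smoothTransition.le_one _

lemma fderiv_radialCutoff_I_mul (z : ℂ) : fderiv ℝ (radialCutoff N) z (I * z) = 0 := by
  have h : HasFDerivAt (radialCutoff N) _ z :=
    (smoothTransition.contDiff (n := 1).differentiable one_ne_zero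
      (N - ‖z‖ ^ 2)).hasDerivAt.comp_hasFDerivAt z
      ((hasStrictFDerivAt_norm_sq z).hasFDerivAt.const_sub N)
  rw [h.fderiv]
  simp [-Complex.inner, inner_I_mul_eq_zero]

end radialCutoff

def radialCoeff (N : ℝ) (ξ z : ℂ) : ℝ := radialCutoff N z * (N⁻¹ * ramp (N * ⟪ξ, z⟫_ℝ))

def angularCoeff (N : ℝ) (ξ z : ℂ) : ℝ :=
  radialCutoff N z * (deriv ramp (N * ⟪ξ, z⟫_ℝ) * ⟪ξ, I * z⟫_ℝ)

def approxEntropy (N : ℝ) (ξ : ℂ) : ℂ → ℂ := polarField (radialCoeff N ξ) (angularCoeff N ξ)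

section approxEntropy

variable {N : ℝ} {ξ : ℂ}

lemma fderiv_radialCoeff_I_mul (hN : N ≠ 0) (z : ℂ) :
    fderiv ℝ (radialCoeff N ξ) z (I * z) = angularCoeff N ξ z := by
  have hχ : DifferentiableAt ℝ (radialCutoff N) z :=
    contDiff_radialCutoff.differentiable (by simp) z
  have hr : HasFDerivAt (fun w => N⁻¹ * ramp (N * ⟪ξ, w⟫_ℝ)) _ z :=
    ((contDiff_ramp.differentiable (by simp) _).hasDerivAt.comp_hasFDerivAt z
      ((innerSL ℝ ξ).hasFDerivAt.const_mul N)).const_mul N⁻¹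
  have h : HasFDerivAt (radialCoeff N ξ) _ z := hχ.hasFDerivAt.mul hr
  rw [h.fderiv]
  simp only [add_apply, smul_apply, fderiv_radialCutoff_I_mul, smul_zero, add_zero]
  rw [angularCoeff]
  simp only [innerSL_apply_apply, smul_eq_mul]
  field_simp

lemma isEntropy_approxEntropy (hN : N ≠ 0) : IsEntropy (approxEntropy N ξ) := by
  have hinner : ContDiff ℝ (⊤ : ℕ∞) fun z : ℂ => N * ⟪ξ, z⟫_ℝ :=
    contDiff_const.mul (innerSL ℝ ξ).contDiff
  refine isEntropy_polarField
    (contDiff_radialCutoff.mul (contDiff_const.mul (contDiff_ramp.comp hinner)))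
    (contDiff_radialCutoff.mul (((contDiff_infty_iff_deriv.1 contDiff_ramp).2.comp hinner).mul
      ((innerSL ℝ ξ).contDiff.comp (contDiff_const.mul contDiff_id))))
    hasCompactSupport_radialCutoff.mul_right hasCompactSupport_radialCutoff.mul_right
    (by simp [radialCoeff, ramp]) (fderiv_radialCoeff_I_mul hN)

lemma abs_radialCoeff_le (z : ℂ) : |radialCoeff N ξ z| ≤ ‖ξ‖ * ‖z‖ := by
  rw [radialCoeff, abs_mul, abs_mul, abs_inv]
  calc |radialCutoff N z| * (|N|⁻¹ * |ramp (N * ⟪ξ, z⟫_ℝ)|)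
      ≤ 1 * (|N|⁻¹ * (|N| * |⟪ξ, z⟫_ℝ|)) := by
        gcongr
        · exact abs_radialCutoff_le_one z
        · rw [← abs_mul]; exact abs_ramp_le _
    _ ≤ ‖ξ‖ * ‖z‖ := by
        rcases eq_or_ne N 0 with rfl | hN
        · simp; positivity
        · rw [one_mul, inv_mul_cancel_left₀ (abs_ne_zero.2 hN)]
          exact abs_real_inner_le_norm ξ z

lemma abs_angularCoeff_le {M : ℝ} (hM : ∀ t, |deriv ramp t| ≤ M) (z : ℂ) :
    |angularCoeff N ξ z| ≤ M * (‖ξ‖ * ‖z‖) := by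
  rw [angularCoeff, abs_mul, abs_mul]
  have hI : |⟪ξ, I * z⟫_ℝ| ≤ ‖ξ‖ * ‖z‖ := by
    simpa using abs_real_inner_le_norm ξ (I * z)
  calc |radialCutoff N z| * (|deriv ramp (N * ⟪ξ, z⟫_ℝ)| * |⟪ξ, I * z⟫_ℝ|)
      ≤ 1 * (M * (‖ξ‖ * ‖z‖)) := by
        gcongr
        · exact abs_radialCutoff_le_one z
        · exact (abs_nonneg _).trans (hM 0)
        · exact hM _
    _ = M * (‖ξ‖ * ‖z‖) := one_mul _

lemma norm_approxEntropy_le {M : ℝ} (hM : ∀ t, |deriv ramp t| ≤ M) (z : ℂ) :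
    ‖approxEntropy N ξ z‖ ≤ (1 + M) * ‖ξ‖ * ‖z‖ ^ 2 :=
  calc ‖approxEntropy N ξ z‖ ≤ (‖ξ‖ * ‖z‖ + M * (‖ξ‖ * ‖z‖)) * ‖z‖ :=
        (norm_polarField_le _ _ z).trans (by
          gcongr
          exacts [abs_radialCoeff_le z, abs_angularCoeff_le hM z])
    _ = (1 + M) * ‖ξ‖ * ‖z‖ ^ 2 := by ring

lemma approxEntropy_eq_zero (hN : 0 < N) {z : ℂ} (h : ⟪ξ, z⟫_ℝ ≤ 0) :
    approxEntropy N ξ z = 0 := by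
  have hNz : N * ⟪ξ, z⟫_ℝ < 1 / 2 := by nlinarith
  simp [approxEntropy, polarField, radialCoeff, angularCoeff, ramp_eq_zero hNz.le,
    deriv_ramp_eq_zero hNz, -Complex.inner]

lemma approxEntropy_eq (z : ℂ) (h₁ : 1 < N * ⟪ξ, z⟫_ℝ) (h₂ : ‖z‖ ^ 2 + 1 ≤ N) :
    approxEntropy N ξ z = ‖z‖ ^ 2 • ξ := by
  have hN : N ≠ 0 := by rintro rfl; simp at h₁; linarith
  rw [← inner_smul_add_inner_smul_I_mul, approxEntropy, polarField, radialCoeff, angularCoeff,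
    radialCutoff_eq_one h₂, ramp_eq_self h₁.le, deriv_ramp_eq_one h₁, inv_mul_cancel_left₀ hN]
  simp only [one_mul]

lemma tendsto_approxEntropy (ξ z : ℂ) :
    Tendsto (fun N => approxEntropy N ξ z) atTop (𝓝 (PhiXi ξ z)) := by
  rw [PhiXi, dotC_eq_inner, real_inner_comm]
  split_ifs with h
  · refine tendsto_const_nhds.congr' ?_
    filter_upwards [eventually_gt_atTop (1 / ⟪ξ, z⟫_ℝ), eventually_ge_atTop (‖z‖ ^ 2 + 1)]
      with N h₁ h₂
    exact (approxEntropy_eq z (by rwa [div_lt_iff₀ h] at h₁) h₂).symm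
  · refine tendsto_const_nhds.congr' ?_
    filter_upwards [eventually_gt_atTop 0] with N hN
    exact (approxEntropy_eq_zero hN (not_lt.1 h)).symm

end approxEntropy

theorem stmt17_general (ξ : ℂ) :
    ∃ Φν : ℕ → ℂ → ℂ,
      (∀ ν : ℕ, IsEntropy (Φν ν)) ∧
      (∀ R : ℝ, 0 < R → ∃ B : ℝ, ∀ ν : ℕ, ∀ z : ℂ, ‖z‖ ≤ R → ‖Φν ν z‖ ≤ B) ∧
      (∀ z : ℂ, Tendsto (fun ν : ℕ => Φν ν z) atTop (𝓝 (PhiXi ξ z))) := by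
  obtain ⟨M, hM⟩ := exists_abs_deriv_ramp_le
  have hM₀ : 0 ≤ 1 + M := by linarith [(abs_nonneg _).trans (hM 0)]
  have hN : Tendsto (fun ν : ℕ => (ν : ℝ) + 1) atTop atTop :=
    tendsto_atTop_add_const_right _ 1 tendsto_natCast_atTop_atTop
  refine ⟨fun ν => approxEntropy (ν + 1) ξ, fun ν => isEntropy_approxEntropy (by positivity),
    fun R _ => ⟨(1 + M) * ‖ξ‖ * R ^ 2, fun ν z hz => ?_⟩,
    fun z => (tendsto_approxEntropy ξ z).comp hN⟩
  calc ‖approxEntropy (ν + 1) ξ z‖ ≤ (1 + M) * ‖ξ‖ * ‖z‖ ^ 2 := norm_approxEntropy_le hM z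
    _ ≤ (1 + M) * ‖ξ‖ * R ^ 2 := by gcongr

/-- `Φ^ξ` is a generalized entropy: it is a pointwise limit of a
locally uniformly bounded sequence of entropies. -/
theorem stmt17 (ξ : ℂ) (hξ : ‖ξ‖ = 1) :
    ∃ Φν : ℕ → ℂ → ℂ,
      (∀ ν : ℕ, IsEntropy (Φν ν)) ∧
      (∀ R : ℝ, 0 < R → ∃ B : ℝ, ∀ ν : ℕ, ∀ z : ℂ, ‖z‖ ≤ R → ‖Φν ν z‖ ≤ B) ∧
      (∀ z : ℂ, Tendsto (fun ν : ℕ => Φν ν z) atTop (𝓝 (PhiXi ξ z))) :=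
  stmt17_general ξ

end
end
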